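/- Let k be a positive integer, let C = {c_1, ..., c_m} be a finite candidate set, let L be a linear order on C with c_1 L c_2 L ... L c_m, and let V be a finite collection of linear-order votes on C, each of which is PerceptionFlip_k-SP with respect to L. Then the plurality election (C, V) is (k+1)-local with respect to L. -/

import Mathlib

/-!
Let `N` be the `(k + 1)`-neighbourhood of `c` in `C'` and suppose a vote `v` ranks `c` first
among `N`; we show that `v` prefers `c` to every `b ∈ C' \ N` (the converse is clear as
`N ⊆ C'`). On the axis `L` there are `k + 1` candidates of `N` strictly between `c` and `b`.
An adjacent swap reverses the relative order of a single pair, so at most `k` pairs differ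
between `L` and the perceived axis `L'`, and some such `z` is still between `c` and `b` in
`L'`. As `v` prefers `c` to `z`, single-peakedness with respect to `L'` makes it prefer `z`
to `b`.
-/

variable {α : Type*} [DecidableEq α]

/-- `l` is a linear-order vote on the finite candidate set `s`:
a duplicate-free list containing exactly the elements of `s`;
earlier in the list means more preferred (for a societal axis `L`,
earlier in the list means smaller in the order `L`). -/
def IsVoteOn (s : Finset α) (l : List α) : Prop :=
  l.Nodup ∧ ∀ a, a ∈ l ↔ a ∈ s

/-- `a` is ranked strictly before `b` in the list `l`. -/
def Prefers (l : List α) (a b : α) : Prop :=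
  l.idxOf a < l.idxOf b

instance (l : List α) (a b : α) : Decidable (Prefers l a b) :=
  inferInstanceAs (Decidable (_ < _))

/-- `v` is single-peaked with respect to the societal axis `L`. -/
def SinglePeaked (L v : List α) : Prop :=
  ∀ c1 c2 c3, c1 ∈ L → c2 ∈ L → c3 ∈ L →
    ((Prefers L c1 c2 ∧ Prefers L c2 c3) ∨ (Prefers L c3 c2 ∧ Prefers L c2 c1)) →
    Prefers v c1 c2 → Prefers v c2 c3

/-- `v` is single-caved with respect to the societal axis `L`. -/
def SingleCaved (L v : List α) : Prop :=
  ∀ c1 c2 c3, c1 ∈ L → c2 ∈ L → c3 ∈ L →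
    ((Prefers L c1 c2 ∧ Prefers L c2 c3) ∨ (Prefers L c3 c2 ∧ Prefers L c2 c1)) →
    Prefers v c2 c1 → Prefers v c3 c2

/-- The restriction of a ranking/order `l` to the subset `C` of candidates. -/
def restrictList (C : Finset α) (l : List α) : List α :=
  l.filter (fun a => decide (a ∈ C))

/-- The plurality score of candidate `c` in the election with candidate set `C`
and votes `V` (each vote a linear order on a set containing `C`): the number of
votes whose most preferred candidate among `C` is `c`. -/
def pluralityScore (C : Finset α) (V : List (List α)) (c : α) : ℕ :=
  V.countP (fun v => decide ((restrictList C v).head? = some c))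

/-- `p` is a plurality winner of the election `(C, V)`. -/
def PluralityWinner (C : Finset α) (V : List (List α)) (p : α) : Prop :=
  p ∈ C ∧ ∀ c ∈ C, pluralityScore C V c ≤ pluralityScore C V p

/-- `l'` is obtained from `l` by one swap of adjacent elements. -/
def AdjSwap (l l' : List α) : Prop :=
  ∃ (u w : List α) (x y : α), l = u ++ x :: y :: w ∧ l' = u ++ y :: x :: w

/-- `WithinSwaps k l l'` : `l` can be transformed into `l'` by a sequence of at
most `k` adjacent swaps. -/
def WithinSwaps : ℕ → List α → List α → Prop
  | 0, l, l' => l = l'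
  | (k+1), l, l' => l = l' ∨ ∃ l'', AdjSwap l l'' ∧ WithinSwaps k l'' l'

/-- `v` is swoon-SP w.r.t. axis `L` on candidate set `C`: the restriction of `v` to
`C` minus `v`'s most preferred candidate is single-peaked with respect to the
restriction of `L` to that set. -/
def SwoonSP (C : Finset α) (L v : List α) : Prop :=
  ∀ t, v.head? = some t →
    SinglePeaked (restrictList (C.erase t) L) (restrictList (C.erase t) v)

/-- The `k`-radius neighborhood of `c` with respect to `C'` and the axis `L`:
if `C'`, listed in `L`-increasing order, is `d_1, ..., d_r` and `c = d_i`, this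
is `{d_j : |i - j| ≤ k}`. -/
def nbhd (k : ℕ) (L : List α) (C' : Finset α) (c : α) : Finset α :=
  ((restrictList C' L).drop ((restrictList C' L).idxOf c - k)).take
    ((restrictList C' L).idxOf c + k + 1 - ((restrictList C' L).idxOf c - k))
    |>.toFinset

/-- The plurality election `(C, V)` is `k`-local with respect to axis `L`. -/
def KLocal (k : ℕ) (L : List α) (C : Finset α) (V : List (List α)) : Prop :=
  ∀ C' ⊆ C, ∀ c ∈ C', pluralityScore (nbhd k L C' c) V c = pluralityScore C' V c

/-- In a `(a1, a2, 0)` scoring election over three candidates, the number of points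
candidate `c` receives from (unit-weight) vote `v`. -/
def score3 (a1 a2 : ℕ) (v : List α) (c : α) : ℕ :=
  if v.idxOf c = 0 then a1 else if v.idxOf c = 1 then a2 else 0

/-- Indicator that the vote `v` does not veto (rank last) candidate `c`. -/
def vetoInd (v : List α) (c : α) : ℕ :=
  if v.getLast? = some c then 0 else 1

/-- The approval score of `c` given approval ballots `W`. -/
def approvalScore {I : Type*} [Fintype I] (W : I → Finset α) (c : α) : ℕ :=
  (Finset.univ.filter fun i => c ∈ W i).card

/-- `p` is an approval winner of the election with candidate set `C` and ballots `W`. -/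
def ApprovalWinner (C : Finset α) {I : Type*} [Fintype I] (W : I → Finset α) (p : α) : Prop :=
  p ∈ C ∧ ∀ c ∈ C, approvalScore W c ≤ approvalScore W p

/-- A vote `v` is PerceptionFlip_k-SP w.r.t. axis `L` on candidate set `C` if `v` is
single-peaked w.r.t. some linear order `L'` on `C` that is within `k` adjacent swaps
of `L`. -/
def PerceptionFlipSP (k : ℕ) (C : Finset α) (L v : List α) : Prop :=
  ∃ L', IsVoteOn C L' ∧ WithinSwaps k L L' ∧ SinglePeaked L' v

namespace List

theorem idxOf_lt_idxOf_of_filter {p : α → Bool} {l : List α} {a b : α} (hb : p b)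
    (h : (l.filter p).idxOf a < (l.filter p).idxOf b) : l.idxOf a < l.idxOf b := by
  induction l with
  | nil => simp at h
  | cons x l ih =>
    by_cases hx : p x
    · simp only [filter_cons_of_pos hx, idxOf_cons, beq_iff_eq, cond_eq_ite] at h ⊢
      split_ifs at h ⊢ <;> grind
    · have hbx : x ≠ b := by rintro rfl; exact hx hb
      simp only [filter_cons_of_neg hx, idxOf_cons, beq_iff_eq, cond_eq_ite, if_neg hbx] at h ⊢
      split_ifs <;> grind

theorem Nodup.mem_take_drop_iff {l : List α} (hl : l.Nodup) {s n : ℕ} {z : α} :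
    z ∈ (l.drop s).take n ↔ z ∈ l ∧ s ≤ l.idxOf z ∧ l.idxOf z < s + n := by
  constructor
  · intro hz
    obtain ⟨m, hm, rfl⟩ := mem_iff_getElem.1 hz
    simp only [length_take, length_drop] at hm
    simp only [getElem_take, getElem_drop, hl.idxOf_getElem]
    exact ⟨getElem_mem _, by omega, by omega⟩
  · rintro ⟨hz, hs, hn⟩
    have hlen := idxOf_lt_length_of_mem hz
    refine mem_iff_getElem.2 ⟨l.idxOf z - s, by simp only [length_take, length_drop]; omega, ?_⟩
    simp only [getElem_take, getElem_drop, Nat.add_sub_cancel' hs, getElem_idxOf]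

theorem Nodup.exists_finset_card_eq_of_add_le_length {l : List α} (hl : l.Nodup) {s n : ℕ}
    (h : s + n ≤ l.length) :
    ∃ S : Finset α, S.card = n ∧
      ∀ z ∈ S, z ∈ l ∧ s ≤ l.idxOf z ∧ l.idxOf z < s + n := by
  have hslice : ((l.drop s).take n).Nodup :=
    ((l.drop s).take_sublist n).trans (l.drop_sublist s) |>.nodup hl
  refine ⟨((l.drop s).take n).toFinset, ?_,
    fun z hz => hl.mem_take_drop_iff.1 (List.mem_toFinset.1 hz)⟩
  rw [toFinset_card_of_nodup hslice, length_take, length_drop]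
  omega

theorem Nodup.restrictList {l : List α} (hl : l.Nodup) (C : Finset α) :
    (restrictList C l).Nodup :=
  hl.filter _

end List

@[simp]
theorem mem_restrictList {C : Finset α} {l : List α} {a : α} :
    a ∈ restrictList C l ↔ a ∈ l ∧ a ∈ C := by
  simp [restrictList]

theorem prefers_of_head?_restrictList_eq {C : Finset α} {v : List α} {a b : α}
    (h : (restrictList C v).head? = some a) (hbC : b ∈ C) (hbv : b ∈ v) (hba : b ≠ a) :
    Prefers v a b := by
  rw [restrictList, List.head?_filter, List.find?_eq_some_iff_append] at h
  obtain ⟨haC, pre, post, rfl, hpre⟩ := h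
  have hb : b ∉ pre := fun hb => by simpa [hbC] using hpre b hb
  have ha : a ∉ pre := fun ha => by simpa [haC] using hpre a ha
  simp [Prefers, List.idxOf_append, ha, hb, Ne.symm hba]

theorem head?_restrictList_eq_some_iff {C : Finset α} {v : List α} {a : α} :
    (restrictList C v).head? = some a ↔
      a ∈ C ∧ a ∈ v ∧ ∀ b ∈ C, b ∈ v → b ≠ a → Prefers v a b := by
  refine ⟨fun h => ?_, fun ⟨haC, hav, htop⟩ => ?_⟩
  · obtain ⟨hav, haC⟩ := mem_restrictList.1 (List.mem_of_mem_head? h)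
    exact ⟨haC, hav, fun b hbC hbv hba => prefers_of_head?_restrictList_eq h hbC hbv hba⟩
  · have hne : restrictList C v ≠ [] := List.ne_nil_of_mem (mem_restrictList.2 ⟨hav, haC⟩)
    obtain ⟨t, ht⟩ : ∃ t, (restrictList C v).head? = some t :=
      ⟨_, List.head?_eq_some_head hne⟩
    obtain ⟨htv, htC⟩ := mem_restrictList.1 (List.mem_of_mem_head? ht)
    by_contra hta
    have hta : t ≠ a := fun h => hta (h ▸ ht)
    have hat := prefers_of_head?_restrictList_eq ht haC hav hta.symm
    exact absurd (hat.trans (htop t htC htv hta)) (lt_irrefl _)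

theorem prefers_append_swap_iff {u w : List α} {x y a b : α} (hab : s(a, b) ≠ s(x, y)) :
    Prefers (u ++ x :: y :: w) a b ↔ Prefers (u ++ y :: x :: w) a b := by
  have ha := List.idxOf_le_length (l := u) (a := a)
  have hb := List.idxOf_le_length (l := u) (a := b)
  simp only [Prefers, List.idxOf_append, List.idxOf_cons, beq_iff_eq, cond_eq_ite]
  rw [Ne, Sym2.eq_iff] at hab
  split_ifs <;> grind [List.idxOf_lt_length_iff]

theorem AdjSwap.exists_prefers_iff {l l' : List α} (h : AdjSwap l l') :
    ∃ e : Sym2 α, ∀ a b, s(a, b) ≠ e → (Prefers l a b ↔ Prefers l' a b) := by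
  obtain ⟨u, w, x, y, rfl, rfl⟩ := h
  exact ⟨s(x, y), fun a b => prefers_append_swap_iff⟩

theorem WithinSwaps.exists_prefers_iff {k : ℕ} {l l' : List α} (h : WithinSwaps k l l') :
    ∃ P : Finset (Sym2 α), P.card ≤ k ∧
      ∀ a b, s(a, b) ∉ P → (Prefers l a b ↔ Prefers l' a b) := by
  induction k generalizing l with
  | zero => exact ⟨∅, le_rfl, fun a b _ => by rw [show l = l' from h]⟩
  | succ k ih =>
    obtain rfl | ⟨l'', hswap, hrest⟩ := h
    · exact ⟨∅, Nat.zero_le _, fun _ _ _ => Iff.rfl⟩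
    obtain ⟨e, he⟩ := hswap.exists_prefers_iff
    obtain ⟨P, hcard, hP⟩ := ih hrest
    refine ⟨insert e P, (Finset.card_insert_le e P).trans (by omega), fun a b hab => ?_⟩
    rw [Finset.mem_insert, not_or] at hab
    exact (he a b hab.1).trans (hP a b hab.2)

theorem exists_mem_sym2_notMem_of_card_lt {P : Finset (Sym2 α)} {S : Finset α} {c b : α}
    (hcb : c ≠ b) (hc : c ∉ S) (hb : b ∉ S) (hcard : P.card < S.card) :
    ∃ z ∈ S, s(c, z) ∉ P ∧ s(z, b) ∉ P := by
  by_contra! hall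
  -- a pair `s(c, z)` or `s(z, b)` with `z ∉ {c, b}` determines `z`, so `f` is injective on `S`
  let f : α → Sym2 α := fun z => if s(c, z) ∈ P then s(c, z) else s(z, b)
  have hmaps : Set.MapsTo f S P := fun z hz => by
    by_cases h : s(c, z) ∈ P <;> simp [f, h, hall z hz]
  have hinj : Set.InjOn f S := fun z hz z' hz' hzz' => by
    simp only [f] at hzz'
    split_ifs at hzz' <;> grind [Sym2.eq_iff]
  exact absurd (Finset.card_le_card_of_injOn f hmaps hinj) (not_le.2 hcard)

def Between (L : List α) (a z b : α) : Prop :=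
  (Prefers L a z ∧ Prefers L z b) ∨ (Prefers L b z ∧ Prefers L z a)

theorem Between.left_ne {L : List α} {a z b : α} (h : Between L a z b) : a ≠ z := by
  rintro rfl
  unfold Between Prefers at h
  omega

theorem Between.ne_right {L : List α} {a z b : α} (h : Between L a z b) : z ≠ b := by
  rintro rfl
  unfold Between Prefers at h
  omega

theorem Between.of_restrictList {C : Finset α} {L : List α} {a z b : α}
    (ha : a ∈ C) (hz : z ∈ C) (hb : b ∈ C) (h : Between (restrictList C L) a z b) :
    Between L a z b := by
  have hp {x y : α} (hy : y ∈ C) : Prefers (restrictList C L) x y → Prefers L x y :=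
    List.idxOf_lt_idxOf_of_filter (by simpa using hy)
  exact h.imp (And.imp (hp hz) (hp hb)) (And.imp (hp hz) (hp ha))

theorem Between.of_prefers_iff {L L' : List α} {P : Finset (Sym2 α)} {a z b : α}
    (hP : ∀ x y, s(x, y) ∉ P → (Prefers L x y ↔ Prefers L' x y))
    (haz : s(a, z) ∉ P) (hzb : s(z, b) ∉ P) (h : Between L a z b) : Between L' a z b := by
  have hza : s(z, a) ∉ P := Sym2.eq_swap ▸ haz
  have hbz : s(b, z) ∉ P := Sym2.eq_swap ▸ hzb
  exact h.imp (And.imp (hP a z haz).1 (hP z b hzb).1) (And.imp (hP b z hbz).1 (hP z a hza).1)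

theorem mem_nbhd_iff {K : ℕ} {L : List α} (hL : L.Nodup) {C' : Finset α} {c z : α} :
    z ∈ nbhd K L C' c ↔ z ∈ restrictList C' L ∧
      (restrictList C' L).idxOf c - K ≤ (restrictList C' L).idxOf z ∧
      (restrictList C' L).idxOf z ≤ (restrictList C' L).idxOf c + K := by
  rw [nbhd, List.mem_toFinset, (hL.restrictList C').mem_take_drop_iff]
  exact and_congr_right fun _ => and_congr_right fun _ => by omega

theorem nbhd_subset (K : ℕ) (L : List α) (C' : Finset α) (c : α) : nbhd K L C' c ⊆ C' :=
  fun z hz => by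
    simp only [nbhd, List.mem_toFinset] at hz
    exact (mem_restrictList.1 (List.mem_of_mem_drop (List.mem_of_mem_take hz))).2

theorem self_mem_nbhd {K : ℕ} {L : List α} (hL : L.Nodup) {C' : Finset α} {c : α}
    (hc : c ∈ restrictList C' L) : c ∈ nbhd K L C' c :=
  (mem_nbhd_iff hL).2 ⟨hc, by omega, by omega⟩

theorem exists_finset_between_of_notMem_nbhd {K : ℕ} {L : List α} (hL : L.Nodup)
    {C' : Finset α} {c b : α} (hc : c ∈ restrictList C' L) (hb : b ∈ restrictList C' L)
    (hbN : b ∉ nbhd K L C' c) :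
    ∃ S : Finset α, S.card = K ∧ ∀ z ∈ S, z ∈ nbhd K L C' c ∧ Between L c z b := by
  rw [mem_nbhd_iff hL] at hbN
  simp only [mem_nbhd_iff hL]
  set R := restrictList C' L
  have hR : R.Nodup := hL.restrictList C'
  have hi := List.idxOf_lt_length_of_mem hc
  have hj := List.idxOf_lt_length_of_mem hb
  have hfar : R.idxOf b + K < R.idxOf c ∨ R.idxOf c + K < R.idxOf b := by
    by_contra! hnear
    exact hbN ⟨hb, by omega, by omega⟩
  -- the `K` positions next to `c` on the side of `b`
  obtain ⟨S, hcard, hS⟩ : ∃ S : Finset α, S.card = K ∧ ∀ z ∈ S, z ∈ R ∧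
      R.idxOf c - K ≤ R.idxOf z ∧ R.idxOf z ≤ R.idxOf c + K ∧ Between R c z b := by
    rcases hfar with hfar | hfar
    · obtain ⟨S, hcard, hS⟩ :=
        hR.exists_finset_card_eq_of_add_le_length (s := R.idxOf c - K) (n := K) (by omega)
      refine ⟨S, hcard, fun z hz => ?_⟩
      obtain ⟨hzR, h₁, h₂⟩ := hS z hz
      exact ⟨hzR, by omega, by omega,
        Or.inr ⟨by unfold Prefers; omega, by unfold Prefers; omega⟩⟩
    · obtain ⟨S, hcard, hS⟩ :=
        hR.exists_finset_card_eq_of_add_le_length (s := R.idxOf c + 1) (n := K) (by omega)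
      refine ⟨S, hcard, fun z hz => ?_⟩
      obtain ⟨hzR, h₁, h₂⟩ := hS z hz
      exact ⟨hzR, by omega, by omega,
        Or.inl ⟨by unfold Prefers; omega, by unfold Prefers; omega⟩⟩
  refine ⟨S, hcard, fun z hz => ?_⟩
  obtain ⟨hzR, h₁, h₂, hbet⟩ := hS z hz
  exact ⟨⟨hzR, h₁, h₂⟩, hbet.of_restrictList (mem_restrictList.1 hc).2
    (mem_restrictList.1 hzR).2 (mem_restrictList.1 hb).2⟩

theorem exists_mem_nbhd_between_of_withinSwaps {k : ℕ} {L L' : List α} (hL : L.Nodup)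
    (hLL' : WithinSwaps k L L') {C' : Finset α} {c b : α} (hc : c ∈ restrictList C' L)
    (hb : b ∈ restrictList C' L) (hbN : b ∉ nbhd (k + 1) L C' c) :
    ∃ z ∈ nbhd (k + 1) L C' c, Between L' c z b := by
  obtain ⟨S, hcard, hS⟩ := exists_finset_between_of_notMem_nbhd hL hc hb hbN
  obtain ⟨P, hP, hPiff⟩ := hLL'.exists_prefers_iff
  have hcb : c ≠ b := by rintro rfl; exact hbN (self_mem_nbhd hL hc)
  obtain ⟨z, hzS, hcz, hzb⟩ := exists_mem_sym2_notMem_of_card_lt hcb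
    (fun hcS => (hS c hcS).2.left_ne rfl) (fun hbS => (hS b hbS).2.ne_right rfl)
    (by omega : P.card < S.card)
  exact ⟨z, (hS z hzS).1, (hS z hzS).2.of_prefers_iff hPiff hcz hzb⟩

theorem perceptionFlipSP_kLocal_general
    (k : ℕ) (C : Finset α) (L : List α) (hL : IsVoteOn C L)
    (V : List (List α))
    (hV : ∀ v ∈ V, IsVoteOn C v ∧ PerceptionFlipSP k C L v) :
    KLocal (k + 1) L C V := by
  intro C' hC' c hc
  refine List.countP_congr fun v hv => ?_
  obtain ⟨⟨-, hvC⟩, L', ⟨-, hL'C⟩, hLL', hSP⟩ := hV v hv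
  have hR {x : α} (hx : x ∈ C') : x ∈ restrictList C' L :=
    mem_restrictList.2 ⟨(hL.2 x).2 (hC' hx), hx⟩
  have hL' {x : α} (hx : x ∈ C') : x ∈ L' := (hL'C x).2 (hC' hx)
  have hNC := nbhd_subset (k + 1) L C' c
  simp only [decide_eq_true_eq, head?_restrictList_eq_some_iff]
  refine ⟨fun ⟨_, hcv, htop⟩ => ⟨hc, hcv, fun b hb hbv hbc => ?_⟩,
    fun ⟨_, hcv, htop⟩ => ⟨self_mem_nbhd hL.1 (hR hc), hcv, fun b hb => htop b (hNC hb)⟩⟩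
  by_cases hbN : b ∈ nbhd (k + 1) L C' c
  · exact htop b hbN hbv hbc
  obtain ⟨z, hzN, hbet⟩ := exists_mem_nbhd_between_of_withinSwaps hL.1 hLL' (hR hc) (hR hb) hbN
  have hcz : Prefers v c z := htop z hzN ((hvC z).2 (hC' (hNC hzN))) hbet.left_ne.symm
  exact hcz.trans (hSP c z b (hL' hc) (hL' (hNC hzN)) (hL' hb) hbet hcz)

/-- If every vote in `V` is PerceptionFlip_k-SP w.r.t. the societal axis
`L`, then the plurality election `(C, V)` is `(k+1)`-local w.r.t. `L`. -/
theorem perceptionFlipSP_kLocal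
    (k : ℕ) (hk : 1 ≤ k) (C : Finset α) (L : List α) (hL : IsVoteOn C L)
    (V : List (List α))
    (hV : ∀ v ∈ V, IsVoteOn C v ∧ PerceptionFlipSP k C L v) :
    KLocal (k + 1) L C V :=
  perceptionFlipSP_kLocal_general k C L hL V hV
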